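/- arXiv:2604.27442 — 2 statements merged into one kernel-verified Lean document; each statement's English description precedes it below -/
import Mathlib

section
/- Induction lemma for superlinear recursions: let (τ_k)_{k≥0} be a strictly increasing sequence in ℕ and (X_t)_{t≥0} a sequence in [0,∞) satisfying X_t ≤ X_{t−1} + a_{t−1} X_{t−1}^{3/2} + b_t for all t ∈ ℕ, where a_t ≥ 0 and b_t ∈ R. For t ≥ τ₀ set B_t = max(0, max_{τ₀ ≤ s ≤ t} Σ_{r=τ₀+1}^{s} b_r) and H_t = X_{τ₀} + B_t; for k ≥ 0 set A_k = Σ_{t=τ_k}^{τ_{k+1}} a_t and S_k = H_{τ_{k+1}} + Σ_{t=τ₀+1}^{τ_k} a_{t−1} X_{t−1}^{3/2}. Fix k ≥ 0 and suppose A_k ≤ (C_k − 1)/(C_k^{3/2} √(max(S_k,1))) for some C_k > 1. Then X_t ≤ C_k S_k for every t ∈ {τ_k, τ_k + 1, …, τ_{k+1}}. -/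
open scoped BigOperators

noncomputable section

/-- `B_t = max(0, max_{τ₀ ≤ s ≤ t} Σ_{r=τ₀+1}^{s} b_r)`.
(The supremum over the empty family in `ℝ` is `0`, and indices `s ∉ [τ₀, t]`
contribute `0`, so this `⨆` is exactly the stated maximum with `0`.) -/
def Bseq (τ0 : ℕ) (b : ℕ → ℝ) (t : ℕ) : ℝ :=
  ⨆ s ∈ Finset.Icc τ0 t, ∑ r ∈ Finset.Icc (τ0 + 1) s, b r

lemma bddAux (τ0 t : ℕ) (b : ℕ → ℝ) :
    BddAbove (Set.range fun s => ⨆ _ : s ∈ Finset.Icc τ0 t, ∑ r ∈ Finset.Icc (τ0 + 1) s, b r) := by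
  have hsub : (Set.range fun s => ⨆ _ : s ∈ Finset.Icc τ0 t, ∑ r ∈ Finset.Icc (τ0 + 1) s, b r)
      ⊆ insert (0:ℝ) (((Finset.Icc τ0 t).image fun s => ∑ r ∈ Finset.Icc (τ0+1) s, b r) : Finset ℝ) := by
    rintro x ⟨s, rfl⟩
    simp only []
    by_cases hs : s ∈ Finset.Icc τ0 t
    · rw [ciSup_pos hs]
      exact Set.mem_insert_iff.mpr (Or.inr (Finset.mem_coe.mpr (Finset.mem_image_of_mem _ hs)))
    · haveI : IsEmpty (s ∈ Finset.Icc τ0 t) := ⟨hs⟩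
      rw [Real.iSup_of_isEmpty]
      exact Set.mem_insert _ _
  exact (((Finset.Icc τ0 t).image fun s => ∑ r ∈ Finset.Icc (τ0+1) s, b r).finite_toSet.insert 0).bddAbove.mono hsub

lemma bseq_le (τ0 t : ℕ) (b : ℕ → ℝ) {s : ℕ} (hs : s ∈ Finset.Icc τ0 t) :
    ∑ r ∈ Finset.Icc (τ0 + 1) s, b r ≤ Bseq τ0 b t := by
  have h := le_ciSup (bddAux τ0 t b) s
  rwa [ciSup_pos hs] at h

lemma bseq_nonneg (τ0 t : ℕ) (b : ℕ → ℝ) (h : τ0 ≤ t) : 0 ≤ Bseq τ0 b t := by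
  have := bseq_le τ0 t b (s := τ0) (by simp [h])
  simpa [Finset.Icc_add_one_left_eq_Ioc] using this

lemma bseq_mono (τ0 t t' : ℕ) (b : ℕ → ℝ) (h : τ0 ≤ t') (htt : t ≤ t') :
    Bseq τ0 b t ≤ Bseq τ0 b t' := by
  apply ciSup_le
  intro s
  by_cases hs : s ∈ Finset.Icc τ0 t
  · rw [ciSup_pos hs]
    exact bseq_le τ0 t' b (Finset.mem_Icc.mpr ⟨(Finset.mem_Icc.mp hs).1, le_trans (Finset.mem_Icc.mp hs).2 htt⟩)
  · haveI : IsEmpty (s ∈ Finset.Icc τ0 t) := ⟨hs⟩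
    rw [Real.iSup_of_isEmpty]
    exact bseq_nonneg τ0 t' b h

lemma sum_shift (f : ℕ → ℝ) (a b : ℕ) :
    ∑ r ∈ Finset.Ioc a b, f (r - 1) = ∑ s ∈ Finset.Ico a b, f s := by
  rw [← Finset.Ico_add_one_add_one_eq_Ioc, Finset.sum_Ico_eq_sum_range, Finset.sum_Ico_eq_sum_range]
  simp only [Nat.add_sub_add_right]
  refine Finset.sum_congr rfl fun i _ => ?_
  congr 1
  omega

lemma cum (τ0 : ℕ) (X a b : ℕ → ℝ)
    (hrec : ∀ t : ℕ, 1 ≤ t → X t ≤ X (t-1) + a (t-1) * X (t-1) ^ ((3:ℝ)/2) + b t) :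
    ∀ t, τ0 ≤ t → X t ≤ X τ0 + (∑ r ∈ Finset.Ioc τ0 t, a (r-1) * X (r-1) ^ ((3:ℝ)/2))
      + ∑ r ∈ Finset.Ioc τ0 t, b r := by
  intro t ht
  induction t, ht using Nat.le_induction with
  | base => simp
  | succ n hn ih =>
    have h1 := hrec (n+1) (by omega)
    simp only [Nat.add_sub_cancel] at h1
    have h2 : ∑ r ∈ Finset.Ioc τ0 (n+1), a (r-1) * X (r-1) ^ ((3:ℝ)/2)
        = (∑ r ∈ Finset.Ioc τ0 n, a (r-1) * X (r-1) ^ ((3:ℝ)/2)) + a n * X n ^ ((3:ℝ)/2) := by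
      rw [← Finset.Icc_add_one_left_eq_Ioc, Finset.sum_Icc_succ_top (by omega), Finset.Icc_add_one_left_eq_Ioc]
      simp
    have h3 : ∑ r ∈ Finset.Ioc τ0 (n+1), b r = (∑ r ∈ Finset.Ioc τ0 n, b r) + b (n+1) := by
      rw [← Finset.Icc_add_one_left_eq_Ioc, Finset.sum_Icc_succ_top (by omega), Finset.Icc_add_one_left_eq_Ioc]
    rw [h2, h3]
    linarith


/-- `H_t = X_{τ₀} + B_t`. -/
def Hseq (τ0 : ℕ) (X b : ℕ → ℝ) (t : ℕ) : ℝ := X τ0 + Bseq τ0 b t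

/-- `A_k = Σ_{t=τ_k}^{τ_{k+1}} a_t`. -/
def Aseq (τ : ℕ → ℕ) (a : ℕ → ℝ) (k : ℕ) : ℝ :=
  ∑ t ∈ Finset.Icc (τ k) (τ (k + 1)), a t

/-- `S_k = H_{τ_{k+1}} + Σ_{t=τ₀+1}^{τ_k} a_{t−1} X_{t−1}^{3/2}`. -/
def Sseq (τ : ℕ → ℕ) (X a b : ℕ → ℝ) (k : ℕ) : ℝ :=
  Hseq (τ 0) X b (τ (k + 1)) +
    ∑ t ∈ Finset.Icc (τ 0 + 1) (τ k), a (t - 1) * X (t - 1) ^ ((3 : ℝ) / 2)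

/-- induction lemma for superlinear recursions. -/
theorem stmt1 (τ : ℕ → ℕ) (hτ : StrictMono τ) (X a b : ℕ → ℝ)
    (hX : ∀ t, 0 ≤ X t) (ha : ∀ t, 0 ≤ a t)
    (hrec : ∀ t : ℕ, 1 ≤ t →
      X t ≤ X (t - 1) + a (t - 1) * X (t - 1) ^ ((3 : ℝ) / 2) + b t)
    (k : ℕ) (C : ℝ) (hC : 1 < C)
    (hA : Aseq τ a k ≤
      (C - 1) / (C ^ ((3 : ℝ) / 2) * Real.sqrt (max (Sseq τ X a b k) 1))) :
    ∀ t ∈ Finset.Icc (τ k) (τ (k + 1)), X t ≤ C * Sseq τ X a b k := by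
  set S := Sseq τ X a b k with hSdef
  set m := max S 1 with hmdef
  have hτ0k : τ 0 ≤ τ k := hτ.monotone (Nat.zero_le k)
  have hτk1 : τ k ≤ τ (k+1) := hτ.monotone (Nat.le_succ k)
  -- nonnegativity of S
  have hsum0 : 0 ≤ ∑ t ∈ Finset.Icc (τ 0 + 1) (τ k), a (t - 1) * X (t - 1) ^ ((3 : ℝ) / 2) :=
    Finset.sum_nonneg fun t _ => mul_nonneg (ha _) (Real.rpow_nonneg (hX _) _)
  have hS0 : 0 ≤ S := by
    have hH : 0 ≤ Hseq (τ 0) X b (τ (k+1)) :=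
      add_nonneg (hX _) (bseq_nonneg _ _ _ (le_trans hτ0k hτk1))
    rw [hSdef]; unfold Sseq; linarith
  have hC0 : (0:ℝ) < C := lt_trans one_pos hC
  have hCS0 : 0 ≤ C * S := mul_nonneg hC0.le hS0
  have hm1 : (1:ℝ) ≤ m := le_max_right _ _
  have hsm1 : (1:ℝ) ≤ Real.sqrt m := by
    rw [show (1:ℝ) = Real.sqrt 1 by simp]; exact Real.sqrt_le_sqrt hm1
  have hsm0 : (0:ℝ) < Real.sqrt m := lt_of_lt_of_le one_pos hsm1
  have hA0 : 0 ≤ Aseq τ a k := Finset.sum_nonneg fun t _ => ha t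
  -- the key scalar inequality
  have hkey : (C * S) ^ ((3:ℝ)/2) * Aseq τ a k ≤ (C - 1) * S := by
    have hmul : (C * S) ^ ((3:ℝ)/2) = C ^ ((3:ℝ)/2) * S ^ ((3:ℝ)/2) :=
      Real.mul_rpow hC0.le hS0
    have hC32 : (0:ℝ) < C ^ ((3:ℝ)/2) := Real.rpow_pos_of_pos hC0 _
    have hS32 : S ^ ((3:ℝ)/2) ≤ S * Real.sqrt m := by
      have h1 : S ^ ((3:ℝ)/2) = S * S ^ ((1:ℝ)/2) := by
        rw [show (3:ℝ)/2 = 1 + 1/2 by norm_num,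
          Real.rpow_add' hS0 (by norm_num), Real.rpow_one]
      rw [h1]
      have : S ^ ((1:ℝ)/2) ≤ Real.sqrt m := by
        rw [← Real.sqrt_eq_rpow]
        exact Real.sqrt_le_sqrt (le_max_left _ _)
      exact mul_le_mul_of_nonneg_left this hS0
    calc (C * S) ^ ((3:ℝ)/2) * Aseq τ a k
        ≤ (C * S) ^ ((3:ℝ)/2) * ((C - 1) / (C ^ ((3:ℝ)/2) * Real.sqrt m)) := by
          exact mul_le_mul_of_nonneg_left hA (Real.rpow_nonneg hCS0 _)
      _ = (C - 1) * (S ^ ((3:ℝ)/2) / Real.sqrt m) := by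
          rw [hmul]; field_simp
      _ ≤ (C - 1) * S := by
          apply mul_le_mul_of_nonneg_left _ (by linarith : (0:ℝ) ≤ C - 1)
          rw [div_le_iff₀ hsm0]
          exact hS32
      _ = (C - 1) * S := rfl
  -- main strong induction
  intro t
  induction t using Nat.strong_induction_on with
  | _ t IH =>
    intro ht
    obtain ⟨htl, htr⟩ := Finset.mem_Icc.mp ht
    have hτ0t : τ 0 ≤ t := le_trans hτ0k htl
    -- cumulative bound
    have h1 := cum (τ 0) X a b hrec t hτ0t
    have h2 : ∑ r ∈ Finset.Ioc (τ 0) t, b r ≤ Bseq (τ 0) b t := by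
      have := bseq_le (τ 0) t b (s := t) (Finset.mem_Icc.mpr ⟨hτ0t, le_refl t⟩)
      rwa [Finset.Icc_add_one_left_eq_Ioc] at this
    have h3 : Bseq (τ 0) b t ≤ Bseq (τ 0) b (τ (k+1)) :=
      bseq_mono _ _ _ _ (le_trans hτ0k hτk1) (le_trans htr (le_refl _))
    have hsplit : (∑ r ∈ Finset.Ioc (τ 0) (τ k), a (r-1) * X (r-1) ^ ((3:ℝ)/2))
        + ∑ r ∈ Finset.Ioc (τ k) t, a (r-1) * X (r-1) ^ ((3:ℝ)/2)
        = ∑ r ∈ Finset.Ioc (τ 0) t, a (r-1) * X (r-1) ^ ((3:ℝ)/2) :=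
      Finset.sum_Ioc_consecutive _ hτ0k htl
    have hbound : ∑ r ∈ Finset.Ioc (τ k) t, a (r-1) * X (r-1) ^ ((3:ℝ)/2)
        ≤ Aseq τ a k * (C * S) ^ ((3:ℝ)/2) := by
      have hterm : ∀ r ∈ Finset.Ioc (τ k) t,
          a (r-1) * X (r-1) ^ ((3:ℝ)/2) ≤ a (r-1) * (C * S) ^ ((3:ℝ)/2) := by
        intro r hr
        obtain ⟨hr1, hr2⟩ := Finset.mem_Ioc.mp hr
        have hmem : r - 1 ∈ Finset.Icc (τ k) (τ (k+1)) := Finset.mem_Icc.mpr ⟨by omega, by omega⟩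
        have hXr : X (r-1) ≤ C * S := IH (r-1) (by omega) hmem
        exact mul_le_mul_of_nonneg_left
          (Real.rpow_le_rpow (hX _) hXr (by norm_num)) (ha _)
      calc ∑ r ∈ Finset.Ioc (τ k) t, a (r-1) * X (r-1) ^ ((3:ℝ)/2)
          ≤ ∑ r ∈ Finset.Ioc (τ k) t, a (r-1) * (C * S) ^ ((3:ℝ)/2) :=
            Finset.sum_le_sum hterm
        _ = (∑ r ∈ Finset.Ioc (τ k) t, a (r-1)) * (C * S) ^ ((3:ℝ)/2) := by
            rw [Finset.sum_mul]
        _ ≤ Aseq τ a k * (C * S) ^ ((3:ℝ)/2) := by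
            apply mul_le_mul_of_nonneg_right _ (Real.rpow_nonneg hCS0 _)
            rw [sum_shift]
            apply Finset.sum_le_sum_of_subset_of_nonneg
            · intro i hi
              rw [Finset.mem_Ico] at hi; rw [Finset.mem_Icc]; omega
            · intro i _ _; exact ha i
    have hSeq : S = Hseq (τ 0) X b (τ (k+1))
        + ∑ r ∈ Finset.Ioc (τ 0) (τ k), a (r-1) * X (r-1) ^ ((3:ℝ)/2) := by
      rw [hSdef]; unfold Sseq; rw [Finset.Icc_add_one_left_eq_Ioc]
    have hH : Hseq (τ 0) X b t ≤ Hseq (τ 0) X b (τ (k+1)) := by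
      unfold Hseq; linarith
    have hfin : X t ≤ S + Aseq τ a k * (C * S) ^ ((3:ℝ)/2) := by
      unfold Hseq at hSeq hH
      linarith [h1, h2, h3, hbound, hsplit]
    linarith [hkey, mul_comm (Aseq τ a k) ((C * S) ^ ((3:ℝ)/2)), hfin]
end
end

section
/- Elliptic potential lemma: let τ ∈ ℕ, let Ω_τ be a symmetric positive definite p × p matrix, and let (H_t)_{t∈ℕ} be symmetric positive semidefinite p × p matrices. Define Ω_t = Ω_{t−1} + H_t for all t ∈ ℕ with t > τ. Then for every t ∈ ℕ with τ < t, Σ_{s=τ+1}^{t} tr(Ω_s^{−1} H_s) ≤ log det(Ω_t) − log det(Ω_τ). -/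
open Matrix
open scoped BigOperators

noncomputable section

/-- Real `p × p` matrices. -/
abbrev Mat (p : ℕ) := Matrix (Fin p) (Fin p) ℝ

lemma key {p : ℕ} {A B : Mat p} (hA : A.PosDef) (hB : B.PosSemidef) :
    ((A + B)⁻¹ * B).trace ≤ Real.log (A + B).det - Real.log A.det := by
  set C := A + B with hCdef
  have hC : C.PosDef := hA.add_posSemidef hB
  have hCinv : C⁻¹.PosDef := hC.inv
  open scoped MatrixOrder in
  have hSps : PosSemidef (CFC.sqrt C⁻¹) := nonneg_iff_posSemidef.mp (CFC.sqrt_nonneg _)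
  open scoped MatrixOrder in
  set S := CFC.sqrt C⁻¹ with hSdef
  open scoped MatrixOrder in
  have hSS : S * S = C⁻¹ := CFC.sqrt_mul_sqrt_self _ (nonneg_iff_posSemidef.mpr hCinv.posSemidef)
  set M := S * A * S with hMdef
  have hMps : M.PosSemidef := by
    have h := hA.posSemidef.mul_mul_conjTranspose_same S
    rwa [show Sᴴ = S from hSps.1] at h
  have hdetA : 0 < A.det := hA.det_pos
  have hdetC : 0 < C.det := hC.det_pos
  have hS2 : S.det * S.det = (C.det)⁻¹ := by
    rw [← det_mul, hSS, det_nonsing_inv, Ring.inverse_eq_inv']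
  have hdetM : M.det = A.det / C.det := by
    calc M.det = S.det * A.det * S.det := by rw [det_mul, det_mul]
    _ = A.det * (S.det * S.det) := by ring
    _ = A.det / C.det := by rw [hS2, div_eq_mul_inv]
  have hdetMpos : 0 < M.det := hdetM ▸ div_pos hdetA hdetC
  have hMH : M.IsHermitian := hMps.1
  -- determinant and trace via eigenvalues
  have hdetprod : M.det = ∏ i, hMH.eigenvalues i := by
    simpa using hMH.det_eq_prod_eigenvalues
  have hU : star (hMH.eigenvectorUnitary : Mat p) * (hMH.eigenvectorUnitary : Mat p) = 1 :=
    mem_unitaryGroup_iff'.mp (hMH.eigenvectorUnitary).2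
  have htr : M.trace = ∑ i, hMH.eigenvalues i := by
    conv_lhs => rw [hMH.spectral_theorem, Unitary.conjStarAlgAut_apply]
    rw [trace_mul_comm, ← mul_assoc, hU, one_mul, trace_diagonal]
    simp
  have hlampos : ∀ i, 0 < hMH.eigenvalues i := by
    intro i
    rcases lt_or_eq_of_le (hMps.eigenvalues_nonneg i) with h | h
    · exact h
    · exfalso
      have : M.det = 0 := by
        rw [hdetprod]
        exact Finset.prod_eq_zero (Finset.mem_univ i) h.symm
      linarith
  -- the trace identity
  have hCC : C⁻¹ * C = 1 := nonsing_inv_mul C (isUnit_iff_ne_zero.mpr hdetC.ne')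
  have hBform : B = C - A := by rw [hCdef]; abel
  have htrace_id : (C⁻¹ * B).trace = (p : ℝ) - M.trace := by
    have h1 : C⁻¹ * B = 1 - C⁻¹ * A := by rw [hBform, Matrix.mul_sub, hCC]
    have h2 : (C⁻¹ * A).trace = M.trace := by
      rw [← hSS, mul_assoc, trace_mul_comm, hMdef, mul_assoc]
    rw [h1, trace_sub, h2, trace_one]
    simp
  rw [htrace_id]
  -- log det difference
  have hlog : Real.log C.det - Real.log A.det = - Real.log M.det := by
    rw [hdetM, Real.log_div hdetA.ne' hdetC.ne']
    ring
  have hlogprod : Real.log M.det = ∑ i, Real.log (hMH.eigenvalues i) := by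
    rw [hdetprod, Real.log_prod]
    intro i _
    exact (hlampos i).ne'
  have hineq : (p : ℝ) - M.trace ≤ - Real.log M.det := by
    rw [htr, hlogprod, ← Finset.sum_neg_distrib]
    have hp : (p : ℝ) = ∑ _i : Fin p, (1 : ℝ) := by simp
    rw [hp, ← Finset.sum_sub_distrib]
    apply Finset.sum_le_sum
    intro i _
    have := Real.log_le_sub_one_of_pos (hlampos i)
    linarith
  linarith [hineq, hlog]

/-- elliptic potential lemma.  Note
`⟨Ω_s⁻¹, H_s⟩ = tr(Ω_s⁻¹ H_s)`. -/
theorem stmt11 {p : ℕ} (τ : ℕ) (Ω : ℕ → Mat p) (H : ℕ → Mat p)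
    (hΩτ : (Ω τ).PosDef) (hH : ∀ t, (H t).PosSemidef)
    (hrec : ∀ t : ℕ, τ < t → Ω t = Ω (t - 1) + H t) :
    ∀ t : ℕ, τ < t →
      ∑ s ∈ Finset.Icc (τ + 1) t, ((Ω s)⁻¹ * H s).trace
        ≤ Real.log (Ω t).det - Real.log (Ω τ).det := by
  have hpos : ∀ t, τ ≤ t → (Ω t).PosDef := by
    intro t ht
    induction t, ht using Nat.le_induction with
    | base => exact hΩτ
    | succ n hn ih =>
      have h := hrec (n + 1) (by omega)
      simp only [Nat.add_sub_cancel] at h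
      rw [h]
      exact ih.add_posSemidef (hH (n + 1))
  intro t ht
  induction t, ht using Nat.le_induction with
  | base =>
    rw [Finset.Icc_self, Finset.sum_singleton]
    have h := hrec (τ + 1) (by omega)
    simp only [Nat.add_sub_cancel] at h
    rw [h]
    exact key hΩτ (hH (τ + 1))
  | succ n hn ih =>
    rw [Finset.sum_Icc_succ_top (by omega : τ + 1 ≤ n + 1)]
    have h := hrec (n + 1) (by omega)
    simp only [Nat.add_sub_cancel] at h
    have hstep : ((Ω (n + 1))⁻¹ * H (n + 1)).trace
        ≤ Real.log (Ω (n + 1)).det - Real.log (Ω n).det := by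
      rw [h]
      exact key (hpos n (by omega)) (hH (n + 1))
    linarith
end
end
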